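/- Under the Kropina change *L = L²/β with an h-vector (assumptions as before), the metric tensor transforms as *gᵢⱼ = (2τ² − ρτ³)gᵢⱼ + 3τ⁴ bᵢbⱼ − 4τ³(lᵢbⱼ + bᵢlⱼ) + (4τ² + ρτ³) lᵢlⱼ, where *gᵢⱼ = ½∂ᵢ∂ⱼ(*L²), gᵢⱼ = ½∂ᵢ∂ⱼ(L²), τ = L/β. -/

import Mathlib

open scoped BigOperators

/-- Partial derivative of `f` in the `i`-th coordinate direction. -/
noncomputable def pd {n : ℕ} (f : (Fin n → ℝ) → ℝ) (i : Fin n) (y : Fin n → ℝ) : ℝ :=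
  fderiv ℝ f y (Pi.single i 1)

section PdAux
variable {n : ℕ} {f g : (Fin n → ℝ) → ℝ} {y : Fin n → ℝ} {i : Fin n}

theorem pd_const (c : ℝ) : pd (fun _ : Fin n → ℝ => c) i y = 0 := by
  simp [pd]

theorem pd_mul (hf : DifferentiableAt ℝ f y) (hg : DifferentiableAt ℝ g y) :
    pd (fun z => f z * g z) i y = f y * pd g i y + g y * pd f i y := by
  simp [pd, fderiv_fun_mul hf hg]

theorem pd_sub (hf : DifferentiableAt ℝ f y) (hg : DifferentiableAt ℝ g y) :
    pd (fun z => f z - g z) i y = pd f i y - pd g i y := by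
  simp [pd, fderiv_fun_sub hf hg]

theorem pd_pow (hf : DifferentiableAt ℝ f y) (k : ℕ) :
    pd (fun z => f z ^ k) i y = (k : ℝ) * f y ^ (k - 1) * pd f i y := by
  induction k with
  | zero => simp [pd_const]
  | succ m ih =>
    have h : (fun z => f z ^ (m + 1)) = fun z => f z ^ m * f z := funext fun z => pow_succ (f z) m
    rw [h, pd_mul (f := fun z => f z ^ m) (hf.pow m) hf, ih]
    cases m with
    | zero => simp
    | succ m' => simp only [Nat.add_sub_cancel]; push_cast; ring

theorem pd_inv (hf : DifferentiableAt ℝ f y) (h0 : f y ≠ 0) :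
    pd (fun z => (f z)⁻¹) i y = -pd f i y / f y ^ 2 := by
  unfold pd
  have h : (fun z => (f z)⁻¹) = Inv.inv ∘ f := rfl
  rw [h, fderiv_comp y (differentiableAt_inv h0) hf]
  simp [fderiv_inv]
  ring

theorem pd_div (hf : DifferentiableAt ℝ f y) (hg : DifferentiableAt ℝ g y) (h0 : g y ≠ 0) :
    pd (fun z => f z / g z) i y = (pd f i y * g y - f y * pd g i y) / g y ^ 2 := by
  simp only [div_eq_mul_inv]
  rw [pd_mul (g := fun z => (g z)⁻¹) hf (hg.inv h0), pd_inv hg h0]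
  field_simp
  ring

theorem pd_congr {U : Set (Fin n → ℝ)} (hU : IsOpen U) (hy : y ∈ U)
    (h : ∀ z ∈ U, f z = g z) : pd f i y = pd g i y := by
  unfold pd
  rw [Filter.EventuallyEq.fderiv_eq (Filter.eventuallyEq_of_mem (hU.mem_nhds hy) h)]

theorem contDiffOn_pd {U : Set (Fin n → ℝ)} (hU : IsOpen U) (hf : ContDiffOn ℝ (⊤ : ℕ∞) f U)
    (i : Fin n) : ContDiffOn ℝ (⊤ : ℕ∞) (pd f i) U := by
  exact (hf.fderiv_of_isOpen hU (by simp)).clm_apply contDiffOn_const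

end PdAux

theorem kropina_key {n : ℕ} (U : Set (Fin n → ℝ)) (hU : IsOpen U)
    (L B : (Fin n → ℝ) → ℝ) (b : Fin n → (Fin n → ℝ) → ℝ) (ρ : ℝ)
    (hL : ContDiffOn ℝ (⊤ : ℕ∞) L U) (hB : ContDiffOn ℝ (⊤ : ℕ∞) B U)
    (hb : ∀ i, ContDiffOn ℝ (⊤ : ℕ∞) (b i) U)
    (hLpos : ∀ y ∈ U, 0 < L y) (hBpos : ∀ y ∈ U, 0 < B y)
    (hdB : ∀ y ∈ U, ∀ i : Fin n, pd B i y = b i y)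
    (hvec : ∀ y ∈ U, ∀ i j : Fin n,
      L y * pd (b i) j y = ρ * (L y * pd (fun z => pd L i z) j y)) :
    ∀ y ∈ U, ∀ i j : Fin n,
      (1/2) * pd (fun z => pd (fun w => L w ^ 4 / B w ^ 2) i z) j y =
        (2 * (L y / B y) ^ 2 - ρ * (L y / B y) ^ 3)
            * ((1/2) * pd (fun z => pd (fun w => L w ^ 2) i z) j y)
        + 3 * (L y / B y) ^ 4 * b i y * b j y
        - 4 * (L y / B y) ^ 3 * (pd L i y * b j y + b i y * pd L j y)
        + (4 * (L y / B y) ^ 2 + ρ * (L y / B y) ^ 3) * pd L i y * pd L j y := by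
  intro y hy i j
  have hLd : ∀ z ∈ U, DifferentiableAt ℝ L z := fun z hz =>
    (hL.contDiffAt (hU.mem_nhds hz)).differentiableAt (by simp)
  have hBd : ∀ z ∈ U, DifferentiableAt ℝ B z := fun z hz =>
    (hB.contDiffAt (hU.mem_nhds hz)).differentiableAt (by simp)
  have hbd : ∀ k, ∀ z ∈ U, DifferentiableAt ℝ (b k) z := fun k z hz =>
    ((hb k).contDiffAt (hU.mem_nhds hz)).differentiableAt (by simp)
  have hpLid : ∀ z ∈ U, DifferentiableAt ℝ (pd L i) z := fun z hz =>
    ((contDiffOn_pd hU hL i).contDiffAt (hU.mem_nhds hz)).differentiableAt (by simp)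
  have hBne : ∀ z ∈ U, B z ≠ 0 := fun z hz => ne_of_gt (hBpos z hz)
  have hLne : L y ≠ 0 := ne_of_gt (hLpos y hy)
  -- first derivative of L^4 / B^2
  have hF1 : ∀ z ∈ U, pd (fun w => L w ^ 4 / B w ^ 2) i z
      = (4 * L z ^ 3 * pd L i z * B z - 2 * L z ^ 4 * b i z) / B z ^ 3 := by
    intro z hz
    rw [pd_div (f := fun w => L w ^ 4) (g := fun w => B w ^ 2) ((hLd z hz).pow 4) ((hBd z hz).pow 2) (pow_ne_zero 2 (hBne z hz)),
      pd_pow (hLd z hz) 4, pd_pow (hBd z hz) 2, hdB z hz]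
    have := hBne z hz
    field_simp
    ring
  -- first derivative of L^2
  have hG1 : ∀ z ∈ U, pd (fun w => L w ^ 2) i z = 2 * (L z * pd L i z) := by
    intro z hz
    rw [pd_pow (hLd z hz) 2]
    push_cast
    ring
  rw [pd_congr hU hy hF1, pd_congr hU hy hG1]
  -- second derivatives
  have h1 : DifferentiableAt ℝ L y := hLd y hy
  have h2 : DifferentiableAt ℝ B y := hBd y hy
  have h3 : DifferentiableAt ℝ (b i) y := hbd i y hy
  have h4 : DifferentiableAt ℝ (pd L i) y := hpLid y hy
  have hbij : pd (b i) j y = ρ * pd (fun z => pd L i z) j y := by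
    have h := hvec y hy i j
    exact mul_left_cancel₀ hLne (h.trans (by ring))
  rw [pd_div (by fun_prop) (by fun_prop) (pow_ne_zero 3 (hBne y hy))]
  rw [show (fun z => 4 * L z ^ 3 * pd L i z * B z - 2 * L z ^ 4 * b i z)
      = (fun z => (fun z => 4 * L z ^ 3 * pd L i z * B z) z - (fun z => 2 * L z ^ 4 * b i z) z) from rfl]
  rw [pd_sub (by fun_prop) (by fun_prop)]
  rw [pd_mul (f := fun z => 4 * L z ^ 3 * pd L i z) (g := B) (by fun_prop) h2]
  rw [pd_mul (f := fun z => 4 * L z ^ 3) (g := pd L i) (by fun_prop) h4]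
  rw [pd_mul (f := fun _ => (4:ℝ)) (g := fun z => L z ^ 3) (by fun_prop) (by fun_prop)]
  rw [pd_mul (f := fun z => 2 * L z ^ 4) (g := b i) (by fun_prop) h3]
  rw [pd_mul (f := fun _ => (2:ℝ)) (g := fun z => L z ^ 4) (by fun_prop) (by fun_prop)]
  rw [pd_mul (f := fun _ => (2:ℝ)) (g := fun z => L z * pd L i z) (by fun_prop) (by fun_prop)]
  rw [pd_mul (f := L) (g := pd L i) h1 h4]
  rw [pd_pow h1 3, pd_pow h1 4, pd_pow h2 3, pd_const, pd_const, hdB y hy j, hbij]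
  norm_num
  have hB0 : B y ≠ 0 := hBne y hy
  field_simp
  ring

/-- Kropina change with an h-vector: the metric tensor transforms as
`*gᵢⱼ = (2τ² − ρτ³) gᵢⱼ + 3τ⁴ bᵢbⱼ − 4τ³ (lᵢbⱼ + bᵢlⱼ) + (4τ² + ρτ³) lᵢlⱼ`,
where `*gᵢⱼ = ½ ∂ᵢ∂ⱼ(*L²)`, `*L = L²/β`, `gᵢⱼ = ½ ∂ᵢ∂ⱼ(L²)`, `τ = L/β`. -/
theorem kropina_metric_tensor
    {n : ℕ} (U : Set (Fin n → ℝ)) (hU : IsOpen U)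
    (hcone : ∀ y ∈ U, ∀ t : ℝ, 0 < t → t • y ∈ U)
    (L : (Fin n → ℝ) → ℝ) (b : Fin n → (Fin n → ℝ) → ℝ) (ρ : ℝ)
    (hL : ContDiffOn ℝ (⊤ : ℕ∞) L U)
    (hb : ∀ i, ContDiffOn ℝ (⊤ : ℕ∞) (b i) U)
    (hhom : ∀ y ∈ U, ∀ t : ℝ, 0 < t → L (t • y) = t * L y)
    (hLpos : ∀ y ∈ U, 0 < L y)
    (hβpos : ∀ y ∈ U, 0 < ∑ j, b j y * y j)
    (hdβ : ∀ y ∈ U, ∀ i : Fin n, pd (fun z => ∑ j, b j z * z j) i y = b i y)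
    (hvec : ∀ y ∈ U, ∀ i j : Fin n,
      L y * pd (b i) j y = ρ * (L y * pd (fun z => pd L i z) j y)) :
    ∀ y ∈ U, ∀ i j : Fin n,
      (1/2) * pd (fun z => pd (fun w => (L w ^ 2 / (∑ k, b k w * w k)) ^ 2) i z) j y =
        (2 * (L y / (∑ k, b k y * y k)) ^ 2 - ρ * (L y / (∑ k, b k y * y k)) ^ 3)
            * ((1/2) * pd (fun z => pd (fun w => L w ^ 2) i z) j y)
        + 3 * (L y / (∑ k, b k y * y k)) ^ 4 * b i y * b j y
        - 4 * (L y / (∑ k, b k y * y k)) ^ 3 * (pd L i y * b j y + b i y * pd L j y)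
        + (4 * (L y / (∑ k, b k y * y k)) ^ 2 + ρ * (L y / (∑ k, b k y * y k)) ^ 3)
            * pd L i y * pd L j y := by
  have hfun : (fun w => (L w ^ 2 / (∑ k, b k w * w k)) ^ 2)
      = (fun w => L w ^ 4 / (∑ k, b k w * w k) ^ 2) :=
    funext fun w => by rw [div_pow, ← pow_mul]
  rw [hfun]
  have hB : ContDiffOn ℝ (⊤ : ℕ∞) (fun z : Fin n → ℝ => ∑ k, b k z * z k) U := by
    apply ContDiffOn.sum
    intro k _
    exact (hb k).mul (ContinuousLinearMap.proj (R := ℝ) (φ := fun _ : Fin n => ℝ) k).contDiff.contDiffOn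
  exact kropina_key U hU L (fun z => ∑ k, b k z * z k) b ρ hL hB hb hLpos hβpos hdβ hvec
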